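/- arXiv:2310.00782 — 2 statements merged into one kernel-verified Lean document; each statement's English description precedes it below -/
import Mathlib

section
/- Let Q_0 = V, let h_0, h_1, …, h_k be positive integers with 2·h_{i-1} ≤ h_i for each i ≥ 1, and let Q_1, …, Q_k ⊆ V be sets such that Q_i is a blocker set for the h_{i-1}-hop shortest paths from sources Q_{i-1}, i.e., every shortest path of exactly h_{i-1} hops starting at a node of Q_{i-1} contains a node of Q_i. Assume moreover that every shortest path in G has at most h_k hops. Then for every pair of nodes s, t with a shortest path between them, there exist an index j ∈ {0,…,k} and a node q ∈ Q_j such that δ(s,t) = δ^{h_j}(s,q) + δ^{h_j}(q,t). -/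
/-!
Follow a shortest `s`–`t` walk `p`, keeping a checkpoint `q ∈ Q i` on it that is reached from `s`
within `h i` hops. If the rest of `p` after `q` has at most `h i` hops we are done at level `i`.
Otherwise the next `h i` hops form a shortest walk from `q ∈ Q i`, so they meet `Q (i+1)` in some
vertex `x`; reaching `x` costs at most `h i + h i ≤ h (i+1)` hops, which restores the invariant at
level `i + 1`. At level `k` the rest of `p` is a shortest walk, hence has at most `h k` hops. Since
subwalks of shortest walks are shortest, both halves realise their hop-bounded distances.
-/

open scoped ENNReal

variable {V : Type*}

/-- `p` is a walk from `s` to `t` along edges of `E`. -/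
def IsWalkFrom (E : V → V → Prop) (s t : V) (p : List V) : Prop :=
  List.Chain E s p ∧ (s :: p).getLast (List.cons_ne_nil s p) = t

/-- Total weight of the walk `s :: p`. -/
noncomputable def walkWeight (w : V → V → NNReal) (s : V) (p : List V) : ℝ≥0∞ :=
  (List.zipWith (fun a b => ((w a b : ℝ≥0∞))) (s :: p) p).sum

/-- `h`-hop-bounded shortest-path distance (`⊤` if no walk with at most `h` edges exists). -/
noncomputable def hopDist (E : V → V → Prop) (w : V → V → NNReal) (h : ℕ) (s t : V) : ℝ≥0∞ :=
  ⨅ (p : List V) (_ : IsWalkFrom E s t p) (_ : p.length ≤ h), walkWeight w s p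

/-- Shortest-path distance (`⊤` if no walk exists). -/
noncomputable def gdist (E : V → V → Prop) (w : V → V → NNReal) (s t : V) : ℝ≥0∞ :=
  ⨅ (p : List V) (_ : IsWalkFrom E s t p), walkWeight w s p

/-- `c` is a simple (directed) cycle through `v`: a closed walk from `v` to `v`
with at least one edge and no repeated vertices. -/
def IsCycleThrough (E : V → V → Prop) (v : V) (c : List V) : Prop :=
  IsWalkFrom E v v c ∧ c ≠ [] ∧ c.Nodup

/-- `c` is a simple cycle through `v` in an undirected graph (at least 3 edges,
so that no edge is traversed twice). -/
def IsUCycleThrough (E : V → V → Prop) (v : V) (c : List V) : Prop :=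
  IsWalkFrom E v v c ∧ 3 ≤ c.length ∧ c.Nodup

/-- The (undirected) edge `{a, b}` appears on the walk `s :: p`. -/
def MemEdge (s : V) (p : List V) (a b : V) : Prop :=
  ∃ i, i + 1 ≤ p.length ∧
    ((a = (s :: p).getD i s ∧ b = (s :: p).getD (i + 1) s) ∨
     (b = (s :: p).getD i s ∧ a = (s :: p).getD (i + 1) s))

section Walks

variable {E : V → V → Prop} {w : V → V → NNReal} {s q t x : V} {p p₁ p₂ : List V}

theorem walkWeight_cons (w : V → V → NNReal) (s a : V) (p : List V) :
    walkWeight w s (a :: p) = w s a + walkWeight w a p := by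
  simp [walkWeight]

theorem walkWeight_ne_top (w : V → V → NNReal) (s : V) (p : List V) :
    walkWeight w s p ≠ ⊤ := by
  induction p generalizing s with
  | nil => simp [walkWeight]
  | cons a p ih => simpa [walkWeight_cons] using ih a

theorem isWalkFrom_nil_iff : IsWalkFrom E s t [] ↔ s = t :=
  ⟨fun h => h.2, by rintro rfl; exact ⟨List.isChain_singleton s, rfl⟩⟩

theorem isWalkFrom_cons_iff {a : V} : IsWalkFrom E s t (a :: p) ↔ E s a ∧ IsWalkFrom E a t p := by
  change List.IsChain E (s :: a :: p) ∧ _ ↔ E s a ∧ List.IsChain E (a :: p) ∧ _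
  rw [List.isChain_cons_cons, List.getLast_cons (List.cons_ne_nil a p), and_assoc]

theorem IsWalkFrom.append (h₁ : IsWalkFrom E s q p₁) (h₂ : IsWalkFrom E q t p₂) :
    IsWalkFrom E s t (p₁ ++ p₂) := by
  induction p₁ generalizing s with
  | nil => rwa [isWalkFrom_nil_iff.1 h₁]
  | cons a p₁ ih =>
    obtain ⟨hsa, h₁⟩ := isWalkFrom_cons_iff.1 h₁
    exact isWalkFrom_cons_iff.2 ⟨hsa, ih h₁⟩

theorem IsWalkFrom.exists_of_append (h : IsWalkFrom E s t (p₁ ++ p₂)) :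
    ∃ q, IsWalkFrom E s q p₁ ∧ IsWalkFrom E q t p₂ := by
  induction p₁ generalizing s with
  | nil => exact ⟨s, isWalkFrom_nil_iff.2 rfl, h⟩
  | cons a p₁ ih =>
    obtain ⟨hsa, h⟩ := isWalkFrom_cons_iff.1 h
    obtain ⟨q, h₁, h₂⟩ := ih h
    exact ⟨q, isWalkFrom_cons_iff.2 ⟨hsa, h₁⟩, h₂⟩

theorem IsWalkFrom.exists_append_of_mem (h : IsWalkFrom E s t p) (hx : x ∈ s :: p) :
    ∃ p₁ p₂, p = p₁ ++ p₂ ∧ IsWalkFrom E s x p₁ ∧ IsWalkFrom E x t p₂ := by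
  rcases List.mem_cons.1 hx with rfl | hx
  · exact ⟨[], p, rfl, isWalkFrom_nil_iff.2 rfl, h⟩
  · obtain ⟨l₁, l₂, rfl⟩ := List.append_of_mem hx
    rw [← List.singleton_append, ← List.append_assoc] at h
    obtain ⟨y, h₁, h₂⟩ := h.exists_of_append
    obtain rfl : y = x := by simpa using h₁.2.symm
    exact ⟨l₁ ++ [y], l₂, by simp, h₁, h₂⟩

theorem walkWeight_append (h₁ : IsWalkFrom E s q p₁) :
    walkWeight w s (p₁ ++ p₂) = walkWeight w s p₁ + walkWeight w q p₂ := by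
  induction p₁ generalizing s with
  | nil => simp [isWalkFrom_nil_iff.1 h₁, walkWeight]
  | cons a p₁ ih =>
    rw [List.cons_append, walkWeight_cons, walkWeight_cons, ih (isWalkFrom_cons_iff.1 h₁).2,
      add_assoc]

end Walks

section Distances

variable {E : V → V → Prop} {w : V → V → NNReal} {n : ℕ} {s q t : V} {p p₁ p₂ : List V}

theorem gdist_le_walkWeight (hp : IsWalkFrom E s t p) : gdist E w s t ≤ walkWeight w s p :=
  iInf₂_le p hp

theorem hopDist_le_walkWeight (hp : IsWalkFrom E s t p) (hn : p.length ≤ n) :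
    hopDist E w n s t ≤ walkWeight w s p :=
  (iInf₂_le p hp).trans (iInf_le _ hn)

theorem gdist_le_hopDist : gdist E w s t ≤ hopDist E w n s t :=
  le_iInf₂ fun _ hp => le_iInf fun _ => gdist_le_walkWeight hp

theorem gdist_le_add : gdist E w s t ≤ gdist E w s q + gdist E w q t := by
  simp only [gdist, ENNReal.iInf_add, ENNReal.add_iInf]
  refine le_iInf₂ fun p₂ h₂ => le_iInf₂ fun p₁ h₁ => ?_
  rw [← walkWeight_append h₁]
  exact gdist_le_walkWeight (h₁.append h₂)

end Distances

def IsShortestWalk (E : V → V → Prop) (w : V → V → NNReal) (s t : V) (p : List V) : Prop :=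
  IsWalkFrom E s t p ∧ walkWeight w s p = gdist E w s t

def IsHopBlocker (E : V → V → Prop) (w : V → V → NNReal) (n : ℕ) (S B : Set V) : Prop :=
  ∀ s ∈ S, ∀ t p, IsShortestWalk E w s t p → p.length = n → ∃ x ∈ s :: p, x ∈ B

namespace IsShortestWalk

variable {E : V → V → Prop} {w : V → V → NNReal} {n : ℕ} {s q t : V} {p p₁ p₂ : List V}

theorem of_append (hp : IsShortestWalk E w s t (p₁ ++ p₂)) (h₁ : IsWalkFrom E s q p₁)
    (h₂ : IsWalkFrom E q t p₂) : IsShortestWalk E w s q p₁ ∧ IsShortestWalk E w q t p₂ := by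
  have hle₁ : gdist E w s q ≤ walkWeight w s p₁ := gdist_le_walkWeight h₁
  have hle₂ : gdist E w q t ≤ walkWeight w q p₂ := gdist_le_walkWeight h₂
  have hsum : walkWeight w s p₁ + walkWeight w q p₂ ≤ gdist E w s q + gdist E w q t := by
    rw [← walkWeight_append h₁, hp.2]
    exact gdist_le_add
  refine ⟨⟨h₁, le_antisymm ?_ hle₁⟩, ⟨h₂, le_antisymm ?_ hle₂⟩⟩
  · exact ENNReal.le_of_add_le_add_right (walkWeight_ne_top w q p₂)
      (hsum.trans (add_le_add le_rfl hle₂))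
  · exact ENNReal.le_of_add_le_add_left (walkWeight_ne_top w s p₁)
      (hsum.trans (add_le_add hle₁ le_rfl))

theorem hopDist_eq (hp : IsShortestWalk E w s t p) (hn : p.length ≤ n) :
    hopDist E w n s t = gdist E w s t :=
  le_antisymm (hp.2 ▸ hopDist_le_walkWeight hp.1 hn) gdist_le_hopDist

theorem gdist_eq_hopDist_add_hopDist (hp : IsShortestWalk E w s t (p₁ ++ p₂))
    (h₁ : IsWalkFrom E s q p₁) (h₂ : IsWalkFrom E q t p₂) (hn₁ : p₁.length ≤ n)
    (hn₂ : p₂.length ≤ n) : gdist E w s t = hopDist E w n s q + hopDist E w n q t := by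
  obtain ⟨hp₁, hp₂⟩ := hp.of_append h₁ h₂
  rw [hp₁.hopDist_eq hn₁, hp₂.hopDist_eq hn₂, ← hp₁.2, ← hp₂.2, ← walkWeight_append h₁, hp.2]

theorem exists_append_of_isHopBlocker {S B : Set V} (hp : IsShortestWalk E w q t p)
    (hB : IsHopBlocker E w n S B) (hq : q ∈ S) (hn : n ≤ p.length) :
    ∃ x ∈ B, ∃ p₁ p₂, p = p₁ ++ p₂ ∧ p₁.length ≤ n ∧ IsWalkFrom E q x p₁ ∧
      IsWalkFrom E x t p₂ := by
  rw [← List.take_append_drop n p] at hp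
  obtain ⟨y, hy₁, hy₂⟩ := hp.1.exists_of_append
  obtain ⟨x, hx, hxB⟩ :=
    hB q hq y _ (hp.of_append hy₁ hy₂).1 (List.length_take_of_le hn)
  obtain ⟨a, b, hab, ha, hb⟩ := hy₁.exists_append_of_mem hx
  refine ⟨x, hxB, a, b ++ p.drop n, ?_, ?_, ha, hb.append hy₂⟩
  · rw [← List.append_assoc, ← hab, List.take_append_drop]
  · calc a.length ≤ (a ++ b).length := by simp
      _ = (p.take n).length := by rw [hab]
      _ ≤ n := List.length_take_le n p

end IsShortestWalk

section Hierarchy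

variable {E : V → V → Prop} {w : V → V → NNReal} {Q : ℕ → Set V} {h : ℕ → ℕ} {k : ℕ}
  {s t : V} {p : List V}

theorem exists_level_or_checkpoint (hQ0 : Q 0 = Set.univ) (hgrow : ∀ i < k, 2 * h i ≤ h (i + 1))
    (hblock : ∀ i < k, IsHopBlocker E w (h i) (Q i) (Q (i + 1)))
    (hp : IsShortestWalk E w s t p) :
    ∀ i ≤ k, (∃ j < i, ∃ q ∈ Q j,
        gdist E w s t = hopDist E w (h j) s q + hopDist E w (h j) q t) ∨
      ∃ q ∈ Q i, ∃ p₁ p₂, p = p₁ ++ p₂ ∧ IsWalkFrom E s q p₁ ∧ IsWalkFrom E q t p₂ ∧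
        p₁.length ≤ h i := by
  intro i hi
  induction i with
  | zero => exact .inr ⟨s, by simp [hQ0], [], p, rfl, isWalkFrom_nil_iff.2 rfl, hp.1, by simp⟩
  | succ i ih =>
    obtain ⟨j, hj, hgood⟩ | ⟨q, hq, p₁, p₂, rfl, h₁, h₂, hn₁⟩ := ih (by omega)
    · exact .inl ⟨j, by omega, hgood⟩
    by_cases hn₂ : p₂.length ≤ h i
    · exact .inl ⟨i, by omega, q, hq, hp.gdist_eq_hopDist_add_hopDist h₁ h₂ hn₁ hn₂⟩
    obtain ⟨x, hx, a, b, rfl, ha, hqx, hxt⟩ :=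
      (hp.of_append h₁ h₂).2.exists_append_of_isHopBlocker (hblock i (by omega)) hq (by omega)
    refine .inr ⟨x, hx, p₁ ++ a, b, by simp, h₁.append hqx, hxt, ?_⟩
    have hh := hgrow i (by omega)
    simp only [List.length_append]
    omega

end Hierarchy

theorem stmt3_general (E : V → V → Prop) (w : V → V → NNReal)
    (Q : ℕ → Set V) (h : ℕ → ℕ) (k : ℕ)
    (hQ0 : Q 0 = Set.univ)
    (hgrow : ∀ i, 1 ≤ i → i ≤ k → 2 * h (i - 1) ≤ h i)
    (hblock : ∀ i, 1 ≤ i → i ≤ k → ∀ s' ∈ Q (i - 1), ∀ (t' : V) (p : List V),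
      IsWalkFrom E s' t' p → p.length = h (i - 1) →
      walkWeight w s' p = gdist E w s' t' → ∃ x ∈ s' :: p, x ∈ Q i)
    (hbound : ∀ (s t : V) (p : List V), IsWalkFrom E s t p →
      walkWeight w s p = gdist E w s t → p.length ≤ h k)
    (s t : V)
    (hst : ∃ p : List V, IsWalkFrom E s t p ∧ walkWeight w s p = gdist E w s t) :
    ∃ j ≤ k, ∃ q ∈ Q j,
      gdist E w s t = hopDist E w (h j) s q + hopDist E w (h j) q t := by
  obtain ⟨p, hp⟩ : ∃ p, IsShortestWalk E w s t p := hst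
  have hgrow' : ∀ i < k, 2 * h i ≤ h (i + 1) := fun i hi => by
    simpa using hgrow (i + 1) (by omega) hi
  have hblock' : ∀ i < k, IsHopBlocker E w (h i) (Q i) (Q (i + 1)) :=
    fun i hi s' hs' t' p' hp' hlen => by
      simpa using hblock (i + 1) (by omega) hi s' hs' t' p' hp'.1 hlen hp'.2
  obtain ⟨j, hj, hgood⟩ | ⟨q, hq, p₁, p₂, rfl, h₁, h₂, hn₁⟩ :=
    exists_level_or_checkpoint hQ0 hgrow' hblock' hp k le_rfl
  · exact ⟨j, hj.le, hgood⟩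
  have hn₂ : p₂.length ≤ h k := hbound q t p₂ h₂ (hp.of_append h₁ h₂).2.2
  exact ⟨k, le_rfl, q, hq, hp.gdist_eq_hopDist_add_hopDist h₁ h₂ hn₁ hn₂⟩

theorem stmt3 (E : V → V → Prop) (w : V → V → NNReal)
    (Q : ℕ → Set V) (h : ℕ → ℕ) (k : ℕ)
    (hQ0 : Q 0 = Set.univ)
    (hpos : ∀ i, 0 < h i)
    (hgrow : ∀ i, 1 ≤ i → i ≤ k → 2 * h (i - 1) ≤ h i)
    (hblock : ∀ i, 1 ≤ i → i ≤ k → ∀ s' ∈ Q (i - 1), ∀ (t' : V) (p : List V),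
      IsWalkFrom E s' t' p → p.length = h (i - 1) →
      walkWeight w s' p = gdist E w s' t' → ∃ x ∈ s' :: p, x ∈ Q i)
    (hbound : ∀ (s t : V) (p : List V), IsWalkFrom E s t p →
      walkWeight w s p = gdist E w s t → p.length ≤ h k)
    (s t : V)
    (hst : ∃ p : List V, IsWalkFrom E s t p ∧ walkWeight w s p = gdist E w s t) :
    ∃ j ≤ k, ∃ q ∈ Q j,
      gdist E w s t = hopDist E w (h j) s q + hopDist E w (h j) q t :=
  stmt3_general E w Q h k hQ0 hgrow hblock hbound s t hst
end

section
/- (Critical edge lemma) Let C = (v_1, …, v_l) be a minimum-weight cycle in an undirected graph G with non-negative weights and let s be a node of C. Then there exists an edge (v_i, v_{i+1}) of C such that the distance along C from s to v_i satisfies ⌈wt(C)/2⌉ − w(v_i,v_{i+1}) ≤ δ_C(s,v_i) ≤ ⌊wt(C)/2⌋ and similarly ⌈wt(C)/2⌉ − w(v_i,v_{i+1}) ≤ δ_C(v_{i+1},s) ≤ ⌊wt(C)/2⌋; moreover δ(s,v_i) = δ_C(s,v_i) and δ(v_{i+1},s) = δ_C(v_{i+1},s), i.e., both arcs of C from s to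 the endpoints of this edge are shortest paths in G. -/
open scoped ENNReal

variable {V : Type*}

/-- Total weight of the walk `s :: p` with natural-number weights. -/
def natWalkWeight (w : V → V → ℕ) (s : V) (p : List V) : ℕ :=
  (List.zipWith w (s :: p) p).sum


/-!
Walk along `C` from `s` and stop at the last vertex `vᵢ` whose arc distance from `s` is at most
`⌊wt(C)/2⌋`; the next vertex then has arc distance at least `⌈wt(C)/2⌉`, which gives the four
inequalities, and both arcs from `s` to the edge `vᵢvᵢ₊₁` weigh at most `wt(C)/2`.
Such an arc is a shortest path: a lighter walk with the same endpoints can be shortcut to a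
different simple path, and two different simple paths with common endpoints contain a simple
cycle of weight at most the sum of theirs, hence lighter than `C`.
-/

open List

def chainWeight (w : V → V → ℕ) (L : List V) : ℕ := (zipWith w L L.tail).sum

def IsPathFrom (E : V → V → Prop) (s t : V) (p : List V) : Prop :=
  IsWalkFrom E s t p ∧ (s :: p).Nodup

section ChainWeight

variable (w : V → V → ℕ)

@[simp] theorem chainWeight_singleton (a : V) : chainWeight w [a] = 0 := rfl

@[simp] theorem chainWeight_cons_cons (a b : V) (l : List V) :
    chainWeight w (a :: b :: l) = w a b + chainWeight w (b :: l) := rfl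

theorem natWalkWeight_eq_chainWeight (s : V) (p : List V) :
    natWalkWeight w s p = chainWeight w (s :: p) := rfl

@[simp] theorem natWalkWeight_nil (s : V) : natWalkWeight w s [] = 0 := rfl

@[simp] theorem natWalkWeight_cons (s x : V) (p : List V) :
    natWalkWeight w s (x :: p) = w s x + natWalkWeight w x p := rfl

theorem chainWeight_append_cons (A : List V) (x : V) (B : List V) :
    chainWeight w (A ++ x :: B) = chainWeight w (A ++ [x]) + chainWeight w (x :: B) := by
  induction A with
  | nil => simp
  | cons a A ih =>
    cases A with
    | nil => simp
    | cons b A => simp only [cons_append, chainWeight_cons_cons] at ih ⊢; omega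

theorem chainWeight_reverse (hw : ∀ a b, w a b = w b a) (L : List V) :
    chainWeight w L.reverse = chainWeight w L := by
  induction L with
  | nil => rfl
  | cons a L ih =>
    cases L with
    | nil => rfl
    | cons b L =>
      have hsplit := chainWeight_append_cons w L.reverse b [a]
      simp only [reverse_cons, append_assoc, singleton_append] at ih hsplit ⊢
      simp [hsplit, ih, hw b a, Nat.add_comm]

theorem natWalkWeight_take_add_drop (s d : V) (c : List V) (k : ℕ) :
    natWalkWeight w s c =
      natWalkWeight w s (c.take k) + natWalkWeight w ((s :: c).getD k d) (c.drop k) := by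
  induction c generalizing s k with
  | nil => simp
  | cons x c ih =>
    cases k with
    | zero => simp
    | succ k =>
      simp only [take_succ_cons, drop_succ_cons, getD_cons_succ, natWalkWeight_cons, ih x k]
      omega

theorem natWalkWeight_take_succ (s d : V) {c : List V} {i : ℕ} (hi : i < c.length) :
    natWalkWeight w s (c.take (i + 1)) =
      natWalkWeight w s (c.take i) + w ((s :: c).getD i d) ((s :: c).getD (i + 1) d) := by
  induction c generalizing s i with
  | nil => simp at hi
  | cons x c ih =>
    cases i with
    | zero => simp
    | succ i =>
      simp only [length_cons, Nat.add_lt_add_iff_right] at hi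
      simp only [take_succ_cons, getD_cons_succ, natWalkWeight_cons, ih x hi]
      omega

end ChainWeight

section Walks

variable {E : V → V → Prop}

theorem isWalkFrom_iff_getLast? {s t : V} {p : List V} :
    IsWalkFrom E s t p ↔ (s :: p).IsChain E ∧ (s :: p).getLast? = some t := by
  rw [IsWalkFrom, getLast?_eq_some_getLast (cons_ne_nil s p), Option.some_inj]
  rfl

theorem IsWalkFrom.mem {s t : V} {p : List V} (h : IsWalkFrom E s t p) (hp : p ≠ []) : t ∈ p := by
  rw [← h.2, getLast_cons hp]
  exact getLast_mem hp

theorem getD_cons_drop {s d : V} {c : List V} {i : ℕ} (hi : i < c.length) :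
    (s :: c).getD (i + 1) d :: c.drop (i + 1) = c.drop i := by
  rw [drop_eq_getElem_cons hi, getD_eq_getElem _ _ (by simpa using hi)]
  rfl

theorem IsWalkFrom.take {s t : V} {c : List V} (h : IsWalkFrom E s t c) {i : ℕ}
    (hi : i ≤ c.length) (d : V) : IsWalkFrom E s ((s :: c).getD i d) (c.take i) := by
  refine ⟨h.1.take (i + 1), ?_⟩
  cases i <;> simp [getLast_eq_getElem, hi]

theorem IsWalkFrom.drop {s t : V} {c : List V} (h : IsWalkFrom E s t c) {i : ℕ}
    (hi : i < c.length) (d : V) : IsWalkFrom E ((s :: c).getD (i + 1) d) t (c.drop (i + 1)) := by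
  rw [isWalkFrom_iff_getLast?] at h ⊢
  rw [getD_cons_drop hi, ← drop_succ_cons (a := s), getLast?_drop, if_neg (by simp; omega)]
  exact ⟨h.1.drop (i + 1), h.2⟩

theorem IsPathFrom.eq_nil_of_self {s : V} {p : List V} (h : IsPathFrom E s s p) : p = [] := by
  by_contra hp
  exact (nodup_cons.mp h.2).1 (h.1.mem hp)

theorem IsPathFrom.tail {s t x : V} {p : List V} (h : IsPathFrom E s t (x :: p)) :
    IsPathFrom E x t p :=
  ⟨⟨h.1.1.tail, by rw [← h.1.2, getLast_cons (cons_ne_nil x p)]⟩, (nodup_cons.mp h.2).2⟩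

theorem IsUCycleThrough.isPathFrom_take {s : V} {c : List V} (h : IsUCycleThrough E s c)
    {i : ℕ} (hi : i < c.length) (d : V) : IsPathFrom E s ((s :: c).getD i d) (c.take i) := by
  refine ⟨h.1.take hi.le d, ?_⟩
  have hc : c ≠ [] := ne_nil_of_length_pos (by omega)
  have hcs : c.getLast hc = s := (getLast_cons hc).symm.trans h.1.2
  have hlast : c.dropLast ++ [s] = c := hcs ▸ dropLast_append_getLast hc
  have hrot : (s :: c.dropLast).Nodup :=
    (perm_append_singleton s _).nodup_iff.mp (by rw [hlast]; exact h.2.2)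
  refine hrot.sublist (Sublist.cons_cons s ?_)
  rw [dropLast_eq_take]
  exact take_sublist_take_left (by omega)

theorem IsUCycleThrough.isPathFrom_drop {s : V} {c : List V} (h : IsUCycleThrough E s c)
    {i : ℕ} (hi : i < c.length) (d : V) :
    IsPathFrom E ((s :: c).getD (i + 1) d) s (c.drop (i + 1)) :=
  ⟨h.1.drop hi d, by rw [getD_cons_drop hi]; exact h.2.2.sublist (drop_sublist i c)⟩

end Walks

theorem exists_eq_append_cons_append_cons_of_not_nodup :
    ∀ {L : List V}, ¬L.Nodup → ∃ a l₁ l₂ l₃, L = l₁ ++ a :: (l₂ ++ a :: l₃)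
  | [], h => absurd nodup_nil h
  | b :: t, h => by
    rw [nodup_cons, not_and_or, not_not] at h
    rcases h with hb | ht
    · obtain ⟨t₁, t₂, rfl⟩ := append_of_mem hb
      exact ⟨b, [], t₁, t₂, rfl⟩
    · obtain ⟨a, l₁, l₂, l₃, rfl⟩ := exists_eq_append_cons_append_cons_of_not_nodup ht
      exact ⟨a, b :: l₁, l₂, l₃, rfl⟩

section Paths

variable {E : V → V → Prop} (w : V → V → ℕ)

theorem List.IsChain.exists_nodup_chainWeight_le {L : List V} (hL : L.IsChain E) :
    ∃ M : List V, M.IsChain E ∧ M.Nodup ∧ M.head? = L.head? ∧ M.getLast? = L.getLast? ∧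
      chainWeight w M ≤ chainWeight w L := by
  induction hn : L.length using Nat.strong_induction_on generalizing L with
  | _ n ih =>
  by_cases hnd : L.Nodup
  · exact ⟨L, hL, hnd, rfl, rfl, le_rfl⟩
  obtain ⟨a, l₁, l₂, l₃, rfl⟩ := exists_eq_append_cons_append_cons_of_not_nodup hnd
  -- cut out the closed subwalk `a :: l₂ ++ [a]`
  have hloop := isChain_split.mp hL
  have hchain : (l₁ ++ a :: l₃).IsChain E :=
    isChain_split.mpr ⟨hloop.1, (isChain_split (l₁ := a :: l₂).mp hloop.2).2⟩
  obtain ⟨M, hM, hMnd, hhead, hlast, hle⟩ := ih _ (by simp at hn ⊢; omega) hchain rfl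
  refine ⟨M, hM, hMnd, ?_, ?_, ?_⟩
  · rw [hhead]; cases l₁ <;> rfl
  · simp [hlast, getLast?_append, getLast?_cons]
  · have e₁ := chainWeight_append_cons w l₁ a (l₂ ++ a :: l₃)
    have e₂ := chainWeight_append_cons w (a :: l₂) a l₃
    have e₃ := chainWeight_append_cons w l₁ a l₃
    simp only [cons_append] at e₂
    omega

theorem IsWalkFrom.exists_isPathFrom_le {s t : V} {q : List V} (hq : IsWalkFrom E s t q) :
    ∃ p, IsPathFrom E s t p ∧ natWalkWeight w s p ≤ natWalkWeight w s q := by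
  rw [isWalkFrom_iff_getLast?] at hq
  obtain ⟨M, hM, hMnd, hhead, hlast, hle⟩ := hq.1.exists_nodup_chainWeight_le w
  obtain ⟨p, rfl⟩ := head?_eq_some_iff.mp hhead
  exact ⟨p, ⟨isWalkFrom_iff_getLast?.mpr ⟨hM, hlast.trans hq.2⟩, hMnd⟩, hle⟩

end Paths

section Cycles

variable {E : V → V → Prop} (w : V → V → ℕ)

theorem exists_eq_append_cons_of_exists_mem {P N : List V} (h : ∃ z ∈ P, z ∈ N) :
    ∃ U z D, P = U ++ z :: D ∧ z ∈ N ∧ ∀ u ∈ U, u ∉ N := by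
  classical
  obtain ⟨z, hz⟩ := Option.isSome_iff_exists.mp
    (find?_isSome (p := fun v => decide (v ∈ N)) |>.mpr (by simpa using h))
  obtain ⟨hzN, U, D, hP, hU⟩ := find?_eq_some_iff_append.mp hz
  exact ⟨U, z, D, hP, by simpa using hzN, fun u hu => by simpa using hU u hu⟩

theorem exists_isUCycleThrough_of_head?_ne (hE : Symmetric E) (hw : ∀ a b, w a b = w b a)
    {s : V} {P N : List V} (hP : (s :: P).IsChain E) (hN : (s :: N).IsChain E)
    (hPnd : (s :: P).Nodup) (hNnd : (s :: N).Nodup) (hhead : P.head? ≠ N.head?)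
    (hmeet : ∃ z ∈ P, z ∈ N) :
    ∃ c, IsUCycleThrough E s c ∧
      natWalkWeight w s c ≤ natWalkWeight w s P + natWalkWeight w s N := by
  -- `z` is the first vertex of `P` on `N`; the cycle goes out along `P` and back along `N`.
  obtain ⟨U, z, D, rfl, hzN, hUN⟩ := exists_eq_append_cons_of_exists_mem hmeet
  obtain ⟨Y, Z, rfl⟩ := append_of_mem hzN
  have hUz : (s :: (U ++ [z])).IsChain E := (isChain_split (l₁ := s :: U).mp hP).1
  have hYz : (s :: (Y ++ [z])).IsChain E := (isChain_split (l₁ := s :: Y).mp hN).1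
  refine ⟨U ++ z :: (Y.reverse ++ [s]), ⟨⟨?_, ?_⟩, ?_, ?_⟩, ?_⟩
  · have hzY : (z :: (Y.reverse ++ [s])).IsChain E := by
      simpa using isChain_reverse.mpr (hYz.imp fun _ _ h => hE h)
    exact (isChain_split (l₁ := s :: U)).mpr ⟨hUz, hzY⟩
  · simp
  · have hUY : 0 < U.length + Y.length := by
      rcases U with _ | ⟨u, U⟩ <;> rcases Y with _ | ⟨y, Y⟩ <;> simp_all
    simp only [length_append, length_cons, length_reverse]
    omega
  · simp only [nodup_cons, nodup_append, mem_append, mem_cons, mem_reverse, nodup_reverse] at *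
    grind
  · have e₁ := chainWeight_append_cons w (s :: U) z (Y.reverse ++ [s])
    have e₂ := chainWeight_append_cons w (s :: U) z D
    have e₃ := chainWeight_append_cons w (s :: Y) z Z
    have e₄ : chainWeight w (z :: (Y.reverse ++ [s])) = chainWeight w (s :: (Y ++ [z])) := by
      rw [← chainWeight_reverse w hw]
      simp
    simp only [cons_append] at e₁ e₂ e₃
    simp only [natWalkWeight_eq_chainWeight]
    omega

theorem exists_isUCycleThrough_of_isPathFrom_ne (hE : Symmetric E) (hw : ∀ a b, w a b = w b a)
    {s t : V} {p q : List V} (hp : IsPathFrom E s t p) (hq : IsPathFrom E s t q) (hpq : p ≠ q) :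
    ∃ v c, IsUCycleThrough E v c ∧
      natWalkWeight w v c ≤ natWalkWeight w s p + natWalkWeight w s q := by
  induction p generalizing s q with
  | nil =>
    obtain rfl : s = t := hp.1.2
    exact absurd hq.eq_nil_of_self.symm hpq
  | cons x p ih =>
    cases q with
    | nil =>
      obtain rfl : s = t := hq.1.2
      exact absurd hp.eq_nil_of_self hpq
    | cons y q =>
      by_cases hxy : x = y
      · subst hxy
        obtain ⟨v, c, hc, hcw⟩ := ih hp.tail hq.tail (fun h => hpq (h ▸ rfl))
        exact ⟨v, c, hc, by simp only [natWalkWeight_cons]; omega⟩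
      · exact ⟨s, exists_isUCycleThrough_of_head?_ne w hE hw hp.1.1 hq.1.1 hp.2 hq.2
          (by simpa using hxy) ⟨t, hp.1.mem (cons_ne_nil x p), hq.1.mem (cons_ne_nil y q)⟩⟩

end Cycles

section ShortestArcs

variable {E : V → V → Prop} (w : V → V → ℕ)

theorem IsPathFrom.natWalkWeight_le_of_two_mul_le (hE : Symmetric E)
    (hw : ∀ a b, w a b = w b a) {W : ℕ}
    (hW : ∀ v c, IsUCycleThrough E v c → W ≤ natWalkWeight w v c)
    {s t : V} {p q : List V} (hp : IsPathFrom E s t p) (hpW : 2 * natWalkWeight w s p ≤ W)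
    (hq : IsWalkFrom E s t q) : natWalkWeight w s p ≤ natWalkWeight w s q := by
  obtain ⟨q', hq', hle⟩ := hq.exists_isPathFrom_le w
  by_cases hpq : p = q'
  · exact hpq ▸ hle
  · obtain ⟨v, c, hc, hcw⟩ := exists_isUCycleThrough_of_isPathFrom_ne w hE hw hp hq' hpq
    have := hW v c hc
    omega

theorem walkWeight_natCast (s : V) (p : List V) :
    walkWeight (fun a b => ((w a b : ℕ) : NNReal)) s p = (natWalkWeight w s p : ℝ≥0∞) := by
  induction p generalizing s with
  | nil => simp [walkWeight]
  | cons x p ih =>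
    rw [natWalkWeight_cons, Nat.cast_add, ← ih x]
    simp [walkWeight]

theorem IsPathFrom.gdist_eq_of_two_mul_le (hE : Symmetric E)
    (hw : ∀ a b, w a b = w b a) {W : ℕ}
    (hW : ∀ v c, IsUCycleThrough E v c → W ≤ natWalkWeight w v c)
    {s t : V} {p : List V} (hp : IsPathFrom E s t p) (hpW : 2 * natWalkWeight w s p ≤ W) :
    gdist E (fun a b => ((w a b : ℕ) : NNReal)) s t = (natWalkWeight w s p : ℝ≥0∞) := by
  refine le_antisymm ((iInf₂_le p hp.1).trans_eq (walkWeight_natCast w s p))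
    (le_iInf₂ fun q hq => ?_)
  rw [walkWeight_natCast]
  exact_mod_cast hp.natWalkWeight_le_of_two_mul_le w hE hw hW hpW hq

end ShortestArcs

theorem exists_le_and_min_le_apply_succ (f : ℕ → ℕ) {a : ℕ} (h₀ : f 0 ≤ a) (n : ℕ) :
    ∃ i ≤ n, f i ≤ a ∧ min (f (n + 1)) (a + 1) ≤ f (i + 1) := by
  induction n with
  | zero => exact ⟨0, le_rfl, h₀, min_le_left _ _⟩
  | succ n ih =>
    by_cases hn : f (n + 1) ≤ a
    · exact ⟨n + 1, le_rfl, hn, min_le_left _ _⟩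
    · obtain ⟨i, hi, hfi, hfi'⟩ := ih
      exact ⟨i, by omega, hfi, by omega⟩

theorem stmt7 (E : V → V → Prop) (hE : Symmetric E) (w : V → V → ℕ)
    (hw : ∀ a b, w a b = w b a) (s : V) (c : List V)
    (hc : IsUCycleThrough E s c)
    (hmin : ∀ (v' : V) (c' : List V), IsUCycleThrough E v' c' →
      natWalkWeight w s c ≤ natWalkWeight w v' c') :
    ∃ i : ℕ, i + 1 ≤ c.length ∧
      ((natWalkWeight w s c + 1) / 2 - w ((s :: c).getD i s) ((s :: c).getD (i + 1) s)
          ≤ natWalkWeight w s (c.take i) ∧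
        natWalkWeight w s (c.take i) ≤ natWalkWeight w s c / 2) ∧
      ((natWalkWeight w s c + 1) / 2 - w ((s :: c).getD i s) ((s :: c).getD (i + 1) s)
          ≤ natWalkWeight w ((s :: c).getD (i + 1) s) (c.drop (i + 1)) ∧
        natWalkWeight w ((s :: c).getD (i + 1) s) (c.drop (i + 1))
          ≤ natWalkWeight w s c / 2) ∧
      gdist E (fun a b => ((w a b : ℕ) : NNReal)) s ((s :: c).getD i s)
        = (natWalkWeight w s (c.take i) : ℝ≥0∞) ∧
      gdist E (fun a b => ((w a b : ℕ) : NNReal)) ((s :: c).getD (i + 1) s) s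
        = (natWalkWeight w ((s :: c).getD (i + 1) s) (c.drop (i + 1)) : ℝ≥0∞) := by
  set W := natWalkWeight w s c
  obtain ⟨n, hn⟩ : ∃ n, c.length = n + 1 := ⟨c.length - 1, by have := hc.2.1; omega⟩
  obtain ⟨i, hin, hfi, hfi'⟩ := exists_le_and_min_le_apply_succ
    (fun j => natWalkWeight w s (c.take j)) (a := W / 2) (by simp) n
  have hi : i < c.length := by omega
  simp only [← hn, take_length] at hfi hfi'
  have hsplit := natWalkWeight_take_add_drop w s s c (i + 1)
  have hedge := natWalkWeight_take_succ w s s hi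
  refine ⟨i, hi, ⟨by omega, hfi⟩, ⟨by omega, by omega⟩,
    (hc.isPathFrom_take hi s).gdist_eq_of_two_mul_le w hE hw hmin (by omega),
    (hc.isPathFrom_drop hi s).gdist_eq_of_two_mul_le w hE hw hmin (by omega)⟩
end
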